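/- arXiv:2208.05653 — 7 statements merged into one kernel-verified Lean document; each statement's English description precedes it below -/
import Mathlib

section
/- Let (A, ∫_A) be an oriented Artinian Gorenstein algebra of socle degree d over ℝ, let ℓ ∈ A_1, and let 0 ≤ i ≤ ⌊d/2⌋. If the pair ((A, ∫_A), ℓ) satisfies the Hodge–Riemann relations HRR_i, then (A, ℓ) satisfies the strong Lefschetz property SL_i; that is, for every 0 ≤ j ≤ i the multiplication map ×ℓ^{d−2j} : A_j → A_{d−j} is bijective. -/
/-!
If `ℓ ^ (d - 2j) * α = 0` then `α` is primitive and its Lefschetz form vanishes, so `HRR` forces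
`α = 0`: multiplication by `ℓ ^ (d - 2j)` is injective on `A_j`. The Poincaré duality pairing
`(α, β) ↦ ∫_A (α * β)` between `A_j` and `A_{d-j}` is perfect, so the two spaces have the same
dimension and the injective map is bijective.
-/

open Module

section MulPairing

variable {K A : Type*} [Field K] [CommRing A] [Algebra K A]

def Submodule.mulPairing (φ : A →ₗ[K] K) (V W : Submodule K A) : V →ₗ[K] W →ₗ[K] K :=
  ((LinearMap.mul K A).compr₂ φ).compl₁₂ V.subtype W.subtype

theorem Submodule.finrank_eq_of_mulPairing_nondegenerate {φ : A →ₗ[K] K} {V W : Submodule K A}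
    [FiniteDimensional K V]
    (hV : ∀ α ∈ V, (∀ β ∈ W, φ (α * β) = 0) → α = 0)
    (hW : ∀ β ∈ W, (∀ α ∈ V, φ (α * β) = 0) → β = 0) :
    finrank K V = finrank K W := by
  have hleft : Function.Injective (V.mulPairing φ W) :=
    (injective_iff_map_eq_zero _).2 fun α hα =>
      Subtype.ext <| hV α α.2 fun β hβ => LinearMap.congr_fun hα ⟨β, hβ⟩
  have hright : Function.Injective (V.mulPairing φ W).flip :=
    (injective_iff_map_eq_zero _).2 fun β hβ =>
      Subtype.ext <| hW β β.2 fun α hα => LinearMap.congr_fun hβ ⟨α, hα⟩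
  have := LinearMap.IsPerfPair.of_injective hleft hright
  exact finrank_of_isPerfPair (V.mulPairing φ W)

theorem Submodule.exists_mul_eq_of_finrank_eq {a : A} {V W : Submodule K A}
    [FiniteDimensional K V] [FiniteDimensional K W]
    (hmaps : ∀ α ∈ V, a * α ∈ W) (hinj : ∀ α ∈ V, a * α = 0 → α = 0)
    (hrank : finrank K V = finrank K W) :
    ∀ β ∈ W, ∃ α ∈ V, a * α = β := by
  let f : V →ₗ[K] W := (LinearMap.mulLeft K a).restrict hmaps
  have hf : Function.Injective f :=
    (injective_iff_map_eq_zero f).2 fun α hα => Subtype.ext <| hinj α α.2 congr($hα.1)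
  intro β hβ
  obtain ⟨α, hα⟩ := (LinearMap.injective_iff_surjective_of_finrank_eq_finrank hrank).1 hf ⟨β, hβ⟩
  exact ⟨α, α.2, congr($hα.1)⟩

theorem finrank_eq_finrank_sub_of_nondegenerate {𝒜 : ℕ → Submodule K A} {d : ℕ}
    {φ : A →ₗ[K] K} (hnd : ∀ j, j ≤ d → ∀ α ∈ 𝒜 j, (∀ β ∈ 𝒜 (d - j), φ (α * β) = 0) → α = 0)
    {j : ℕ} (hj : j ≤ d) [FiniteDimensional K (𝒜 j)] :
    finrank K (𝒜 j) = finrank K (𝒜 (d - j)) := by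
  refine Submodule.finrank_eq_of_mulPairing_nondegenerate (hnd j hj) fun β hβ hβ0 => ?_
  refine hnd (d - j) (Nat.sub_le d j) β hβ fun α hα => ?_
  rw [mul_comm]
  exact hβ0 α (by rwa [Nat.sub_sub_self hj] at hα)

end MulPairing

theorem eq_zero_of_pow_mul_eq_zero_of_pos {R A : Type*} [CommSemiring R] [Preorder R] [Semiring A]
    [Module R A] {φ : A →ₗ[R] R} {c : R} {ℓ α : A} {k : ℕ}
    (hpos : ℓ ^ (k + 1) * α = 0 → α ≠ 0 → 0 < c * φ (ℓ ^ k * α * α)) (h : ℓ ^ k * α = 0) :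
    α = 0 := by
  by_contra hα
  have hprim : ℓ ^ (k + 1) * α = 0 := by rw [pow_succ', mul_assoc, h, mul_zero]
  simpa [h] using hpos hprim hα

theorem hodgeRiemann_implies_strongLefschetz_general
    (A : Type) [CommRing A] [Algebra ℝ A]
    (𝒜 : ℕ → Submodule ℝ A) [GradedAlgebra 𝒜]
    (d : ℕ)
    (hfin : ∀ j, FiniteDimensional ℝ (𝒜 j))
    (intA : A →ₗ[ℝ] ℝ)
    (hnd : ∀ j, j ≤ d → ∀ α ∈ 𝒜 j, (∀ β ∈ 𝒜 (d - j), intA (α * β) = 0) → α = 0)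
    (ℓ : A) (hℓ : ℓ ∈ 𝒜 1)
    (i : ℕ) (hi : i ≤ d / 2)
    -- `HRR_i`: the `j`-th Lefschetz form is positive definite on the `j`-th primitive subspace
    (hHRR : ∀ j, j ≤ i → ∀ α ∈ 𝒜 j, ℓ ^ (d - 2*j + 1) * α = 0 → α ≠ 0 →
      0 < (-1 : ℝ) ^ j * intA (ℓ ^ (d - 2*j) * α * α)) :
    -- `SL_i`: multiplication `×ℓ^(d−2j) : A_j → A_{d−j}` is bijective for all `j ≤ i`
    ∀ j, j ≤ i →
      (∀ α ∈ 𝒜 j, ℓ ^ (d - 2*j) * α = 0 → α = 0) ∧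
      (∀ β ∈ 𝒜 (d - j), ∃ α ∈ 𝒜 j, ℓ ^ (d - 2*j) * α = β) := by
  intro j hj
  have hinj : ∀ α ∈ 𝒜 j, ℓ ^ (d - 2*j) * α = 0 → α = 0 := fun α hα =>
    eq_zero_of_pow_mul_eq_zero_of_pos (hHRR j hj α hα)
  have hmaps : ∀ α ∈ 𝒜 j, ℓ ^ (d - 2*j) * α ∈ 𝒜 (d - j) := fun α hα => by
    have hpow : ℓ ^ (d - 2*j) ∈ 𝒜 (d - 2*j) := by simpa using SetLike.pow_mem_graded _ hℓ
    simpa [show d - 2*j + j = d - j by omega] using SetLike.mul_mem_graded hpow hα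
  have := hfin j
  have := hfin (d - j)
  exact ⟨hinj, Submodule.exists_mul_eq_of_finrank_eq hmaps hinj
    (finrank_eq_finrank_sub_of_nondegenerate hnd (by omega))⟩

/-- If an oriented Artinian Gorenstein algebra `(A, ∫_A)` of socle degree `d`
satisfies the Hodge–Riemann relations `HRR_i` with respect to a linear form `ℓ ∈ A₁`, then the
pair `(A, ℓ)` satisfies the strong Lefschetz property `SL_i`: for every `0 ≤ j ≤ i` the
multiplication map `×ℓ^(d−2j) : A_j → A_{d−j}` is bijective. -/
theorem hodgeRiemann_implies_strongLefschetz
    (A : Type) [CommRing A] [Algebra ℝ A]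
    (𝒜 : ℕ → Submodule ℝ A) [GradedAlgebra 𝒜]
    (d : ℕ)
    (hfin : ∀ j, FiniteDimensional ℝ (𝒜 j))
    (htrunc : ∀ j, d < j → 𝒜 j = ⊥)
    (hone : 𝒜 0 = Submodule.span ℝ {(1 : A)})
    (intA : A →ₗ[ℝ] ℝ)
    (hnd : ∀ j, j ≤ d → ∀ α ∈ 𝒜 j, (∀ β ∈ 𝒜 (d - j), intA (α * β) = 0) → α = 0)
    (ℓ : A) (hℓ : ℓ ∈ 𝒜 1)
    (i : ℕ) (hi : i ≤ d / 2)
    -- `HRR_i`: the `j`-th Lefschetz form is positive definite on the `j`-th primitive subspace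
    (hHRR : ∀ j, j ≤ i → ∀ α ∈ 𝒜 j, ℓ ^ (d - 2*j + 1) * α = 0 → α ≠ 0 →
      0 < (-1 : ℝ) ^ j * intA (ℓ ^ (d - 2*j) * α * α)) :
    -- `SL_i`: multiplication `×ℓ^(d−2j) : A_j → A_{d−j}` is bijective for all `j ≤ i`
    ∀ j, j ≤ i →
      (∀ α ∈ 𝒜 j, ℓ ^ (d - 2*j) * α = 0 → α = 0) ∧
      (∀ β ∈ 𝒜 (d - j), ∃ α ∈ 𝒜 j, ℓ ^ (d - 2*j) * α = β) :=
  hodgeRiemann_implies_strongLefschetz_general A 𝒜 d hfin intA hnd ℓ hℓ i hi hHRR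
end

section
/- Let (A, ∫_A) be an oriented Artinian Gorenstein algebra of socle degree d over ℝ, let ℓ ∈ A_1, and let 0 ≤ i ≤ ⌊d/2⌋. If (A, ℓ) satisfies the strong Lefschetz property SL_i, then for each 0 ≤ j ≤ i one has dim_ℝ P_{j,ℓ} = h_j − h_{j−1}, the degree-j component decomposes as a direct sum A_j = P_{j,ℓ} ⊕ ℓ·A_{j−1}, and this decomposition is orthogonal with respect to the j-th Lefschetz form (α,β)_j^ℓ. -/
/-!
Put `P = A_j ∩ ker ℓ^(d-2j+1)` and `L = ℓ·A_{j-1}`. Multiplication by `ℓ^(d-2j+1)` maps `A_j`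
into `A_{d-j+1}`, and its composite with `ℓ : A_{j-1} → A_j` is the bijection
`ℓ^(d-2(j-1)) : A_{j-1} → A_{d-j+1}` given by `SL_i`. Whenever `g ∘ f` is bijective, `ker g`
is a complement of `im f`; hence `A_j = P ⊕ L`, and `ℓ` is injective on `A_{j-1}`, so
`dim L = h_{j-1}`. Orthogonality holds because `ℓ^(d-2j)·α·ℓγ = (ℓ^(d-2j+1)·α)·γ = 0`.
For `j = 0` the same argument runs with `A_{-1} = 0`, using `A_{d+1} = 0`.
-/

open LinearMap Module

namespace Submodule

section Ring

variable {R M N P : Type*} [Ring R] [AddCommGroup M] [AddCommGroup N] [AddCommGroup P]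
  [Module R M] [Module R N] [Module R P] {f : N →ₗ[R] M} {g : M →ₗ[R] P}
  {W : Submodule R N} {V : Submodule R M} {U : Submodule R P}

theorem inf_ker_sup_map_eq_of_le_map_comp (hWV : W.map f ≤ V) (hVU : V.map g ≤ U)
    (hsurj : U ≤ W.map (g ∘ₗ f)) : V ⊓ ker g ⊔ W.map f = V := by
  refine le_antisymm (sup_le inf_le_left hWV) fun v hv ↦ ?_
  obtain ⟨w, hw, hgw⟩ := hsurj (hVU ⟨v, hv, rfl⟩)
  have hfw : f w ∈ V := hWV ⟨w, hw, rfl⟩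
  have hker : v - f w ∈ ker g := by
    rw [mem_ker, map_sub, sub_eq_zero]
    exact hgw.symm
  exact mem_sup.mpr ⟨v - f w, mem_inf.mpr ⟨V.sub_mem hv hfw, hker⟩,
    f w, ⟨w, hw, rfl⟩, sub_add_cancel v _⟩

theorem disjoint_ker_map_of_disjoint_ker_comp (hinj : Disjoint W (ker (g ∘ₗ f))) :
    Disjoint (ker g) (W.map f) := by
  rw [disjoint_def]
  rintro _ hg ⟨w, hw, rfl⟩
  rw [disjoint_ker.mp hinj w hw hg, map_zero]

end Ring

theorem finrank_inf_ker_eq_sub {K M N P : Type*} [DivisionRing K] [AddCommGroup M]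
    [AddCommGroup N] [AddCommGroup P] [Module K M] [Module K N] [Module K P]
    {f : N →ₗ[K] M} {g : M →ₗ[K] P} {W : Submodule K N} {V : Submodule K M}
    {U : Submodule K P} [FiniteDimensional K V] (hWV : W.map f ≤ V) (hVU : V.map g ≤ U)
    (hinj : Disjoint W (ker (g ∘ₗ f))) (hsurj : U ≤ W.map (g ∘ₗ f)) :
    finrank K (V ⊓ ker g : Submodule K M) = finrank K V - finrank K W := by
  have hL : finrank K (W.map f) = finrank K W := by
    rw [← range_domRestrict]
    exact finrank_range_of_inj
      (injective_domRestrict_iff.mpr (hinj.mono_right (ker_le_ker_comp f g)))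
  have : FiniteDimensional K (W.map f) := finiteDimensional_of_le hWV
  have : FiniteDimensional K (V ⊓ ker g : Submodule K M) := finiteDimensional_of_le inf_le_left
  have h := finrank_sup_add_finrank_inf_eq (V ⊓ ker g) (W.map f)
  rw [inf_ker_sup_map_eq_of_le_map_comp hWV hVU hsurj,
    ((disjoint_ker_map_of_disjoint_ker_comp hinj).mono_left inf_le_right).eq_bot,
    finrank_bot, hL] at h
  omega

end Submodule

theorem map_mulLeft_le_of_mem_graded {ι R A : Type*} [AddMonoid ι] [CommSemiring R]
    [Semiring A] [Algebra R A] {𝒜 : ι → Submodule R A} [SetLike.GradedMonoid 𝒜] {x : A}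
    {i : ι} (hx : x ∈ 𝒜 i) (j : ι) : (𝒜 j).map (mulLeft R x) ≤ 𝒜 (i + j) := by
  rintro _ ⟨y, hy, rfl⟩
  exact SetLike.mul_mem_graded hx hy

theorem primitive_decomposition {K A : Type*} [Field K] [CommRing A] [Algebra K A] {ℓ : A}
    {n : ℕ} {V W U : Submodule K A} [FiniteDimensional K V] (hWV : W.map (mulLeft K ℓ) ≤ V)
    (hVU : V.map (mulLeft K (ℓ ^ (n + 1))) ≤ U)
    (hinj : ∀ w ∈ W, ℓ ^ (n + 2) * w = 0 → w = 0)
    (hsurj : ∀ u ∈ U, ∃ w ∈ W, ℓ ^ (n + 2) * w = u) :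
    finrank K (V ⊓ ker (mulLeft K (ℓ ^ (n + 1))) : Submodule K A) =
        finrank K V - finrank K W ∧
      V = V ⊓ ker (mulLeft K (ℓ ^ (n + 1))) ⊔ W.map (mulLeft K ℓ) ∧
      V ⊓ ker (mulLeft K (ℓ ^ (n + 1))) ⊓ W.map (mulLeft K ℓ) = ⊥ ∧
      ∀ α ∈ V ⊓ ker (mulLeft K (ℓ ^ (n + 1))), ∀ β ∈ W.map (mulLeft K ℓ),
        ℓ ^ n * α * β = 0 := by
  have hcomp : mulLeft K (ℓ ^ (n + 1)) ∘ₗ mulLeft K ℓ = mulLeft K (ℓ ^ (n + 2)) := by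
    rw [← mulLeft_mul, ← pow_succ]
  have hinj' : Disjoint W (ker (mulLeft K (ℓ ^ (n + 1)) ∘ₗ mulLeft K ℓ)) := by
    rw [hcomp, disjoint_ker]
    exact hinj
  have hsurj' : U ≤ W.map (mulLeft K (ℓ ^ (n + 1)) ∘ₗ mulLeft K ℓ) := by
    rw [hcomp]
    intro u hu
    obtain ⟨w, hw, rfl⟩ := hsurj u hu
    exact ⟨w, hw, rfl⟩
  refine ⟨Submodule.finrank_inf_ker_eq_sub hWV hVU hinj' hsurj',
    (Submodule.inf_ker_sup_map_eq_of_le_map_comp hWV hVU hsurj').symm,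
    ((Submodule.disjoint_ker_map_of_disjoint_ker_comp hinj').mono_left inf_le_right).eq_bot, ?_⟩
  rintro α hα _ ⟨γ, -, rfl⟩
  calc ℓ ^ n * α * (ℓ * γ) = ℓ ^ (n + 1) * α * γ := by ring
    _ = 0 := by rw [show ℓ ^ (n + 1) * α = 0 from (Submodule.mem_inf.mp hα).2, zero_mul]

theorem strongLefschetz_primitive_decomposition_general
    (A : Type) [CommRing A] [Algebra ℝ A]
    (𝒜 : ℕ → Submodule ℝ A) [GradedAlgebra 𝒜]
    (d : ℕ)
    (hfin : ∀ j, FiniteDimensional ℝ (𝒜 j))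
    (htrunc : ∀ j, d < j → 𝒜 j = ⊥)
    (intA : A →ₗ[ℝ] ℝ)
    (ℓ : A) (hℓ : ℓ ∈ 𝒜 1)
    (i : ℕ) (hi : i ≤ d / 2)
    -- `SL_i`: multiplication `×ℓ^(d−2j) : A_j → A_{d−j}` is bijective for all `j ≤ i`
    (hSL : ∀ j, j ≤ i →
      (∀ α ∈ 𝒜 j, ℓ ^ (d - 2*j) * α = 0 → α = 0) ∧
      (∀ β ∈ 𝒜 (d - j), ∃ α ∈ 𝒜 j, ℓ ^ (d - 2*j) * α = β)) :
    ∀ j, j ≤ i →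
      -- the primitive subspace `P_{j,ℓ}` and the submodule `ℓ·A_{j−1}` (zero when `j = 0`)
      (Module.finrank ℝ
          ↥(𝒜 j ⊓ LinearMap.ker (LinearMap.mulLeft ℝ (ℓ ^ (d - 2*j + 1))))
        = Module.finrank ℝ ↥(𝒜 j)
            - (if j = 0 then 0 else Module.finrank ℝ ↥(𝒜 (j - 1)))) ∧
      (𝒜 j = (𝒜 j ⊓ LinearMap.ker (LinearMap.mulLeft ℝ (ℓ ^ (d - 2*j + 1))))
          ⊔ (if j = 0 then ⊥ else Submodule.map (LinearMap.mulLeft ℝ ℓ) (𝒜 (j - 1)))) ∧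
      ((𝒜 j ⊓ LinearMap.ker (LinearMap.mulLeft ℝ (ℓ ^ (d - 2*j + 1))))
          ⊓ (if j = 0 then ⊥ else Submodule.map (LinearMap.mulLeft ℝ ℓ) (𝒜 (j - 1))) = ⊥) ∧
      (∀ α ∈ 𝒜 j ⊓ LinearMap.ker (LinearMap.mulLeft ℝ (ℓ ^ (d - 2*j + 1))),
        ∀ β ∈ (if j = 0 then (⊥ : Submodule ℝ A)
            else Submodule.map (LinearMap.mulLeft ℝ ℓ) (𝒜 (j - 1))),
          (-1 : ℝ) ^ j * intA (ℓ ^ (d - 2*j) * α * β) = 0) := by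
  intro j hj
  have h2j : 2 * j ≤ d := by omega
  have hVU : (𝒜 j).map (mulLeft ℝ (ℓ ^ (d - 2 * j + 1))) ≤ 𝒜 (d - j + 1) := by
    have h := map_mulLeft_le_of_mem_graded (SetLike.pow_mem_graded (d - 2 * j + 1) hℓ) j
    rwa [smul_eq_mul, mul_one, show d - 2 * j + 1 + j = d - j + 1 by omega] at h
  have := hfin j
  cases j with
  | zero =>
    obtain ⟨hrank, hsup, hinf, -⟩ := primitive_decomposition (W := ⊥) (by simp) hVU
      (by simp) (by simp [htrunc (d + 1) (by omega), eq_comm])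
    simp only [Submodule.map_bot, finrank_bot] at hrank hsup hinf
    exact ⟨hrank, hsup, hinf, by simp⟩
  | succ k =>
    obtain ⟨hinj, hsurj⟩ := hSL k (by omega)
    rw [show d - 2 * k = d - 2 * (k + 1) + 2 by omega] at hinj hsurj
    rw [show d - (k + 1) + 1 = d - k by omega] at hVU
    obtain ⟨hrank, hsup, hinf, horth⟩ := primitive_decomposition
      (by simpa only [add_comm] using map_mulLeft_le_of_mem_graded hℓ k) hVU hinj hsurj
    simp only [if_neg k.succ_ne_zero, Nat.add_sub_cancel]
    refine ⟨hrank, hsup, hinf, fun α hα β hβ ↦ ?_⟩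
    rw [horth α hα β hβ, map_zero, mul_zero]

/-- If an oriented Artinian Gorenstein algebra `(A, ∫_A)` of socle degree `d`
satisfies the strong Lefschetz property `SL_i` with respect to `ℓ ∈ A₁`, then for each `j ≤ i`
the primitive subspace `P_{j,ℓ} = ker(×ℓ^(d−2j+1) : A_j → A_{d−j+1})` has dimension
`h_j − h_{j−1}`, `A_j = P_{j,ℓ} ⊕ ℓ·A_{j−1}`, and this decomposition is orthogonal with respect
to the `j`-th Lefschetz form `(α,β) ↦ (−1)^j ∫_A (ℓ^(d−2j)·α·β)`. -/
theorem strongLefschetz_primitive_decomposition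
    (A : Type) [CommRing A] [Algebra ℝ A]
    (𝒜 : ℕ → Submodule ℝ A) [GradedAlgebra 𝒜]
    (d : ℕ)
    (hfin : ∀ j, FiniteDimensional ℝ (𝒜 j))
    (htrunc : ∀ j, d < j → 𝒜 j = ⊥)
    (hone : 𝒜 0 = Submodule.span ℝ {(1 : A)})
    (intA : A →ₗ[ℝ] ℝ)
    (hnd : ∀ j, j ≤ d → ∀ α ∈ 𝒜 j, (∀ β ∈ 𝒜 (d - j), intA (α * β) = 0) → α = 0)
    (ℓ : A) (hℓ : ℓ ∈ 𝒜 1)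
    (i : ℕ) (hi : i ≤ d / 2)
    -- `SL_i`: multiplication `×ℓ^(d−2j) : A_j → A_{d−j}` is bijective for all `j ≤ i`
    (hSL : ∀ j, j ≤ i →
      (∀ α ∈ 𝒜 j, ℓ ^ (d - 2*j) * α = 0 → α = 0) ∧
      (∀ β ∈ 𝒜 (d - j), ∃ α ∈ 𝒜 j, ℓ ^ (d - 2*j) * α = β)) :
    ∀ j, j ≤ i →
      -- the primitive subspace `P_{j,ℓ}` and the submodule `ℓ·A_{j−1}` (zero when `j = 0`)
      (Module.finrank ℝ
          ↥(𝒜 j ⊓ LinearMap.ker (LinearMap.mulLeft ℝ (ℓ ^ (d - 2*j + 1))))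
        = Module.finrank ℝ ↥(𝒜 j)
            - (if j = 0 then 0 else Module.finrank ℝ ↥(𝒜 (j - 1)))) ∧
      (𝒜 j = (𝒜 j ⊓ LinearMap.ker (LinearMap.mulLeft ℝ (ℓ ^ (d - 2*j + 1))))
          ⊔ (if j = 0 then ⊥ else Submodule.map (LinearMap.mulLeft ℝ ℓ) (𝒜 (j - 1)))) ∧
      ((𝒜 j ⊓ LinearMap.ker (LinearMap.mulLeft ℝ (ℓ ^ (d - 2*j + 1))))
          ⊓ (if j = 0 then ⊥ else Submodule.map (LinearMap.mulLeft ℝ ℓ) (𝒜 (j - 1))) = ⊥) ∧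
      (∀ α ∈ 𝒜 j ⊓ LinearMap.ker (LinearMap.mulLeft ℝ (ℓ ^ (d - 2*j + 1))),
        ∀ β ∈ (if j = 0 then (⊥ : Submodule ℝ A)
            else Submodule.map (LinearMap.mulLeft ℝ ℓ) (𝒜 (j - 1))),
          (-1 : ℝ) ^ j * intA (ℓ ^ (d - 2*j) * α * β) = 0) :=
  strongLefschetz_primitive_decomposition_general A 𝒜 d hfin htrunc intA ℓ hℓ i hi hSL
end

section
/- Let (A, ∫_A) be an oriented Artinian Gorenstein algebra of socle degree d over ℝ, let U ⊆ A_1, and let 0 ≤ i ≤ ⌊d/2⌋. If (A, ∫_A) satisfies the mixed Hodge–Riemann relations mixed HRR_i on U, then A satisfies the mixed strong Lefschetz property mixed SL_i on U; that is, for every 0 ≤ j ≤ i and every sequence ℓ_1, …, ℓ_{d−2j} of elements of U, the multiplication map ×(ℓ_1⋯ℓ_{d−2j}) : A_j → A_{d−j} is bijective. -/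
/-!
If `ℓ₁⋯ℓ_{d−2j} · α = 0` for `α ∈ A_j`, then `α` is also killed by `ℓ₀ℓ₁⋯ℓ_{d−2j}` for any
`ℓ₀ ∈ U` (take `ℓ₀ = ℓ₁`; if `d = 2j` the map is the identity), so it is primitive, while its
Lefschetz form `∫ ℓ₁⋯ℓ_{d−2j} α α` vanishes; the Hodge–Riemann relations force `α = 0`.
Poincaré duality gives `dim A_j = dim A_{d−j}`, so the injective map `A_j → A_{d−j}` is bijective.
-/

open Module

theorem Submodule.finrank_le_of_forall_mul_eq_zero_imp {K A : Type*} [Field K] [Ring A]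
    [Algebra K A] (f : A →ₗ[K] K) (M N : Submodule K A) [FiniteDimensional K N]
    (hM : ∀ α ∈ M, (∀ β ∈ N, f (α * β) = 0) → α = 0) :
    finrank K M ≤ finrank K N := by
  let pairing : M →ₗ[K] Dual K N :=
    ((LinearMap.mul K A).compl₁₂ M.subtype N.subtype).compr₂ f
  have hpairing : Function.Injective pairing := by
    refine (injective_iff_map_eq_zero pairing).mpr fun α hα => Subtype.ext ?_
    exact hM α α.2 fun β hβ => LinearMap.congr_fun hα ⟨β, hβ⟩
  calc finrank K M ≤ finrank K (Dual K N) := LinearMap.finrank_le_finrank_of_injective hpairing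
    _ = finrank K N := Subspace.dual_finrank_eq

section Graded

variable {K A : Type*} [Field K] [CommRing A] [Algebra K A] (𝒜 : ℕ → Submodule K A)

theorem finrank_graded_eq_of_poincareDuality (d : ℕ) [∀ j, FiniteDimensional K (𝒜 j)]
    (f : A →ₗ[K] K)
    (hnd : ∀ j, j ≤ d → ∀ α ∈ 𝒜 j, (∀ β ∈ 𝒜 (d - j), f (α * β) = 0) → α = 0)
    {j : ℕ} (hj : j ≤ d) :
    finrank K (𝒜 j) = finrank K (𝒜 (d - j)) := by
  refine le_antisymm (Submodule.finrank_le_of_forall_mul_eq_zero_imp f _ _ (hnd j hj)) ?_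
  have hdual := hnd (d - j) (Nat.sub_le d j)
  rw [Nat.sub_sub_self hj] at hdual
  exact Submodule.finrank_le_of_forall_mul_eq_zero_imp f _ _ hdual

variable [SetLike.GradedMonoid 𝒜]

theorem prod_mem_graded_of_forall_mem_one {n : ℕ} (L : Fin n → A) (hL : ∀ k, L k ∈ 𝒜 1) :
    ∏ k, L k ∈ 𝒜 n := by
  simpa using SetLike.prod_mem_graded 𝒜 (fun _ => 1) L (F := Finset.univ) fun k _ => hL k

def gradedMulLeft {x : A} {m : ℕ} (hx : x ∈ 𝒜 m) {n k : ℕ} (hk : m + n = k) :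
    𝒜 n →ₗ[K] 𝒜 k :=
  (LinearMap.mulLeft K x).restrict fun _ ha => hk ▸ SetLike.mul_mem_graded hx ha

@[simp]
theorem coe_gradedMulLeft {x : A} {m : ℕ} (hx : x ∈ 𝒜 m) {n k : ℕ} (hk : m + n = k)
    (α : 𝒜 n) : (gradedMulLeft 𝒜 hx hk α : A) = x * α :=
  rfl

theorem gradedMulLeft_injective {x : A} {m : ℕ} (hx : x ∈ 𝒜 m) {n k : ℕ} (hk : m + n = k)
    (h : ∀ α ∈ 𝒜 n, x * α = 0 → α = 0) : Function.Injective (gradedMulLeft 𝒜 hx hk) := by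
  refine (injective_iff_map_eq_zero _).mpr fun α hα => Subtype.ext (h α α.2 ?_)
  simpa using congrArg Subtype.val hα

end Graded

theorem mul_eq_zero_imp_eq_zero_of_mixedHodgeRiemann {A : Type*} [CommRing A] [Algebra ℝ A]
    (intA : A →ₗ[ℝ] ℝ) (U : Set A) {j n : ℕ} (L : Fin n → A) (hLU : ∀ k, L k ∈ U)
    (M : Submodule ℝ A)
    (hHRR : ∀ ℓ₀ ∈ U, ∀ α ∈ M, (ℓ₀ * ∏ k, L k) * α = 0 → α ≠ 0 →
      0 < (-1 : ℝ) ^ j * intA ((∏ k, L k) * α * α))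
    {α : A} (hα : α ∈ M) (hLα : (∏ k, L k) * α = 0) : α = 0 := by
  rcases Nat.eq_zero_or_pos n with rfl | hn
  · simpa using hLα
  by_contra hne
  have hpos := hHRR (L ⟨0, hn⟩) (hLU _) α hα (by rw [mul_assoc, hLα, mul_zero]) hne
  simp [hLα] at hpos

theorem mixedHodgeRiemann_implies_mixedStrongLefschetz_general
    (A : Type) [CommRing A] [Algebra ℝ A]
    (𝒜 : ℕ → Submodule ℝ A) [GradedAlgebra 𝒜]
    (d : ℕ)
    (hfin : ∀ j, FiniteDimensional ℝ (𝒜 j))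
    (intA : A →ₗ[ℝ] ℝ)
    (hnd : ∀ j, j ≤ d → ∀ α ∈ 𝒜 j, (∀ β ∈ 𝒜 (d - j), intA (α * β) = 0) → α = 0)
    (U : Set A) (hU : ∀ u ∈ U, u ∈ 𝒜 1)
    (i : ℕ) (hi : i ≤ d / 2)
    -- mixed `HRR_i` on `U`
    (hMHRR : ∀ j, j ≤ i → ∀ ℓ₀ ∈ U, ∀ L : Fin (d - 2*j) → A, (∀ k, L k ∈ U) →
      ∀ α ∈ 𝒜 j, (ℓ₀ * ∏ k, L k) * α = 0 → α ≠ 0 →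
        0 < (-1 : ℝ) ^ j * intA ((∏ k, L k) * α * α)) :
    -- mixed `SL_i` on `U`
    ∀ j, j ≤ i → ∀ L : Fin (d - 2*j) → A, (∀ k, L k ∈ U) →
      (∀ α ∈ 𝒜 j, (∏ k, L k) * α = 0 → α = 0) ∧
      (∀ β ∈ 𝒜 (d - j), ∃ α ∈ 𝒜 j, (∏ k, L k) * α = β) := by
  intro j hj L hLU
  have hinj : ∀ α ∈ 𝒜 j, (∏ k, L k) * α = 0 → α = 0 := fun α hα =>
    mul_eq_zero_imp_eq_zero_of_mixedHodgeRiemann intA U L hLU (𝒜 j) (hMHRR j hj · · L hLU) hα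
  have hL := prod_mem_graded_of_forall_mem_one 𝒜 L fun k => hU _ (hLU k)
  have hdeg : d - 2 * j + j = d - j := by omega
  have hsurj : Function.Surjective (gradedMulLeft 𝒜 hL hdeg) :=
    (LinearMap.injective_iff_surjective_of_finrank_eq_finrank
      (finrank_graded_eq_of_poincareDuality 𝒜 d intA hnd (by omega))).mp
      (gradedMulLeft_injective 𝒜 hL hdeg hinj)
  refine ⟨hinj, fun β hβ => ?_⟩
  obtain ⟨α, hα⟩ := hsurj ⟨β, hβ⟩
  exact ⟨α, α.2, congrArg Subtype.val hα⟩

/-- If an oriented Artinian Gorenstein algebra `(A, ∫_A)` of socle degree `d`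
satisfies the mixed Hodge–Riemann relations `mixed HRR_i` on a subset `U ⊆ A₁`, then `A`
satisfies the mixed strong Lefschetz property `mixed SL_i` on `U`: for every `0 ≤ j ≤ i` and
every sequence `ℓ₁, …, ℓ_{d−2j}` of elements of `U`, the multiplication map
`×(ℓ₁⋯ℓ_{d−2j}) : A_j → A_{d−j}` is bijective. -/
theorem mixedHodgeRiemann_implies_mixedStrongLefschetz
    (A : Type) [CommRing A] [Algebra ℝ A]
    (𝒜 : ℕ → Submodule ℝ A) [GradedAlgebra 𝒜]
    (d : ℕ)
    (hfin : ∀ j, FiniteDimensional ℝ (𝒜 j))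
    (htrunc : ∀ j, d < j → 𝒜 j = ⊥)
    (hone : 𝒜 0 = Submodule.span ℝ {(1 : A)})
    (intA : A →ₗ[ℝ] ℝ)
    (hnd : ∀ j, j ≤ d → ∀ α ∈ 𝒜 j, (∀ β ∈ 𝒜 (d - j), intA (α * β) = 0) → α = 0)
    (U : Set A) (hU : ∀ u ∈ U, u ∈ 𝒜 1)
    (i : ℕ) (hi : i ≤ d / 2)
    -- mixed `HRR_i` on `U`
    (hMHRR : ∀ j, j ≤ i → ∀ ℓ₀ ∈ U, ∀ L : Fin (d - 2*j) → A, (∀ k, L k ∈ U) →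
      ∀ α ∈ 𝒜 j, (ℓ₀ * ∏ k, L k) * α = 0 → α ≠ 0 →
        0 < (-1 : ℝ) ^ j * intA ((∏ k, L k) * α * α)) :
    -- mixed `SL_i` on `U`
    ∀ j, j ≤ i → ∀ L : Fin (d - 2*j) → A, (∀ k, L k ∈ U) →
      (∀ α ∈ 𝒜 j, (∏ k, L k) * α = 0 → α = 0) ∧
      (∀ β ∈ 𝒜 (d - j), ∃ α ∈ 𝒜 j, (∏ k, L k) * α = β) :=
  mixedHodgeRiemann_implies_mixedStrongLefschetz_general A 𝒜 d hfin intA hnd U hU i hi hMHRR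
end

section
/- Let d ≥ 0, let 0 ≤ i ≤ ⌊d/2⌋, let c_0, …, c_d ∈ ℝ (extended by c_k = 0 for k < 0 or k > d), and let F = Σ_{k=0}^d binom(d,k)·c_k·X^k·Y^{d−k} ∈ ℝ[X,Y]. Then the rank of the (i+1) × (d−i+1) Toeplitz matrix φ^i_d(c) with (p,q) entry c_{i+q−p} (0 ≤ p ≤ i, 0 ≤ q ≤ d−i) equals the dimension of the ℝ-linear span of the partial derivatives {∂^i F/∂X^p ∂Y^{i−p} : 0 ≤ p ≤ i} inside ℝ[X,Y]. -/
/-!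
Differentiating the binary form `F = Σ binom(d,k) c_k X^k Y^(d-k)` `p` times in `X` and `r` times in
`Y` gives `d!/(d-p-r)!` times the binary form of degree `d - p - r` with the shifted coefficients
`c_(p+q)`. With `p + r = i`, the `i`-th partials are therefore, up to a common nonzero factor, the
images of the rows of the Toeplitz matrix (in reverse order) under the linear map sending a
coefficient vector to its binary form of degree `d - i`. That map is injective because the
monomials `X^q Y^(d-i-q)` are linearly independent, so it preserves the dimension of the row span.
-/

open MvPolynomial Finset
open scoped Nat

theorem Nat.choose_mul_descFactorial_mul_descFactorial {n p q r : ℕ} (h : p + q + r ≤ n) :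
    n.choose (p + q) * (p + q).descFactorial p * (n - (p + q)).descFactorial r
      = n.descFactorial (p + r) * (n - (p + r)).choose q := by
  refine Nat.eq_of_mul_eq_mul_right
    (Nat.mul_pos q.factorial_pos (n - (p + r) - q).factorial_pos) ?_
  have hq : (p + q) - p = q := by omega
  have hr : n - (p + q) - r = n - (p + r) - q := by omega
  calc n.choose (p + q) * (p + q).descFactorial p * (n - (p + q)).descFactorial r
        * (q ! * (n - (p + r) - q)!)
      = n.choose (p + q) * ((p + q - p)! * (p + q).descFactorial p)
          * ((n - (p + q) - r)! * (n - (p + q)).descFactorial r) := by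
        rw [hq, hr]; ring
    _ = n ! := by
        rw [Nat.factorial_mul_descFactorial (by omega), Nat.factorial_mul_descFactorial (by omega),
          Nat.choose_mul_factorial_mul_factorial (by omega)]
    _ = n.descFactorial (p + r) * (n - (p + r)).choose q * (q ! * (n - (p + r) - q)!) := by
        rw [mul_assoc, ← mul_assoc _ q !, Nat.choose_mul_factorial_mul_factorial (by omega),
          mul_comm, Nat.factorial_mul_descFactorial (by omega)]

namespace MvPolynomial

variable {σ R : Type*} [CommSemiring R]

theorem pderiv_pow_monomial (i : σ) (n : ℕ) (s : σ →₀ ℕ) (a : R) :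
    ((pderiv i).toLinearMap ^ n : Module.End R (MvPolynomial σ R)) (monomial s a)
      = monomial (s - Finsupp.single i n) (a * (s i).descFactorial n) := by
  induction n with
  | zero => simp
  | succ n ih =>
    rw [pow_succ', Module.End.mul_apply, ih, Derivation.coeFn_coe, pderiv_monomial,
      tsub_tsub, ← Finsupp.single_add, Nat.descFactorial_succ]
    simp only [Finsupp.coe_tsub, Pi.sub_apply, Finsupp.single_eq_same]
    push_cast
    ring_nf

theorem C_mul_X_pow_mul_X_pow (i j : σ) (a : R) (k l : ℕ) :
    C a * X i ^ k * X j ^ l = monomial (Finsupp.single i k + Finsupp.single j l) a := by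
  rw [X_pow_eq_monomial, X_pow_eq_monomial, C_mul_monomial, monomial_mul, mul_one, mul_one]

theorem pderiv_pow_mul_pderiv_pow_monomial_single_add_single {i j : σ} (hij : i ≠ j)
    (p r a b : ℕ) (x : R) :
    ((pderiv i).toLinearMap ^ p * (pderiv j).toLinearMap ^ r : Module.End R (MvPolynomial σ R))
        (monomial (Finsupp.single i a + Finsupp.single j b) x)
      = monomial (Finsupp.single i (a - p) + Finsupp.single j (b - r))
          (x * b.descFactorial r * a.descFactorial p) := by
  classical
  have hs : Finsupp.single i a + Finsupp.single j b - Finsupp.single j r - Finsupp.single i p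
      = Finsupp.single i (a - p) + Finsupp.single j (b - r) := by
    ext k
    by_cases hi : k = i
    · subst hi; simp [hij]
    · by_cases hj : k = j
      · subst hj; simp [hi]
      · simp [Ne.symm hi, Ne.symm hj]
  rw [Module.End.mul_apply, pderiv_pow_monomial, pderiv_pow_monomial, hs]
  simp [hij]

end MvPolynomial

section

variable {R : Type*} [CommSemiring R]

noncomputable def binaryForm (d : ℕ) (c : ℕ → R) : MvPolynomial (Fin 2) R :=
  ∑ k ∈ range (d + 1), C ((d.choose k : R) * c k) * X 0 ^ k * X 1 ^ (d - k)

theorem pderiv_pow_mul_pderiv_pow_binaryForm {d p r : ℕ} (h : p + r ≤ d) (c : ℕ → R) :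
    ((pderiv 0).toLinearMap ^ p * (pderiv 1).toLinearMap ^ r :
        Module.End R (MvPolynomial (Fin 2) R)) (binaryForm d c)
      = (d.descFactorial (p + r) : R) • binaryForm (d - (p + r)) (fun q => c (p + q)) := by
  obtain ⟨m, rfl⟩ : ∃ m, d = p + r + m := ⟨d - (p + r), by omega⟩
  -- only the exponents `p ≤ k ≤ p + m` of `X` survive: split `range (d + 1)` into three blocks
  have hd : p + r + m + 1 = p + (m + 1) + r := by omega
  simp only [binaryForm, map_sum, smul_sum, C_mul_X_pow_mul_X_pow,
    pderiv_pow_mul_pderiv_pow_monomial_single_add_single Fin.zero_ne_one, smul_monomial]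
  rw [hd, sum_range_add, sum_range_add, sum_eq_zero (s := range p), sum_eq_zero (s := range r),
    zero_add, add_zero, Nat.add_sub_cancel_left]
  · refine sum_congr rfl fun q hq => ?_
    rw [mem_range] at hq
    rw [Nat.add_sub_cancel_left, show p + r + m - (p + q) - r = m - q by omega, smul_eq_mul]
    congr 1
    have hcoeff :=
      Nat.choose_mul_descFactorial_mul_descFactorial (show p + q + r ≤ p + r + m by omega)
    rw [Nat.add_sub_cancel_left] at hcoeff
    convert congrArg (fun n : ℕ => (n : R) * c (p + q)) hcoeff using 1 <;> push_cast <;> ring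
  · intro k hk
    rw [Nat.descFactorial_eq_zero_iff_lt.2 (show p + r + m - (p + (m + 1) + k) < r by
      rw [mem_range] at hk; omega)]
    simp
  · intro k hk
    rw [Nat.descFactorial_eq_zero_iff_lt.2 (mem_range.1 hk)]
    simp

noncomputable def binaryFormMap (m : ℕ) : (Fin (m + 1) → R) →ₗ[R] MvPolynomial (Fin 2) R :=
  Fintype.linearCombination R fun q => C (m.choose q : R) * X 0 ^ (q : ℕ) * X 1 ^ (m - q)

theorem binaryFormMap_apply (m : ℕ) (c : ℕ → R) :
    binaryFormMap m (fun q => c q) = binaryForm m c := by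
  rw [binaryFormMap, Fintype.linearCombination_apply, binaryForm,
    ← Fin.sum_univ_eq_sum_range (fun k => C ((m.choose k : R) * c k) * X 0 ^ k * X 1 ^ (m - k))]
  refine sum_congr rfl fun q _ => ?_
  rw [smul_eq_C_mul, C_mul]
  ring

end

theorem binaryFormMap_injective {K : Type*} [Field K] [CharZero K] (m : ℕ) :
    Function.Injective (binaryFormMap (R := K) m) := by
  rw [binaryFormMap, ← linearIndependent_iff_injective_fintypeLinearCombination]
  have hexp : Function.Injective fun q : Fin (m + 1) =>
      Finsupp.single (0 : Fin 2) (q : ℕ) + Finsupp.single 1 (m - q) :=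
    fun q q' h => Fin.ext (by simpa using DFunLike.congr_fun h 0)
  convert ((basisMonomials (Fin 2) K).linearIndependent.comp _ hexp).units_smul
    (fun q => Units.mk0 (m.choose q : K) (Nat.cast_ne_zero.2 (Nat.choose_pos (by omega)).ne'))
    using 1
  funext q
  rw [C_mul_X_pow_mul_X_pow]
  simp only [Pi.smul_apply', Function.comp_apply, coe_basisMonomials, Units.smul_def, Units.val_mk0,
    smul_monomial, smul_eq_mul, mul_one]

open MvPolynomial in
theorem toeplitz_rank_eq_span_partials_general
    (d i : ℕ) (hi : i ≤ d / 2) (c : ℕ → ℝ) :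
    (Matrix.of fun (p : Fin (i + 1)) (q : Fin (d - i + 1)) =>
        c (i + q.val - p.val)).rank
      = Module.finrank ℝ (Submodule.span ℝ (Set.range fun p : Fin (i + 1) =>
          (((pderiv (0 : Fin 2)).toLinearMap ^ p.val *
              (pderiv (1 : Fin 2)).toLinearMap ^ (i - p.val) :
            Module.End ℝ (MvPolynomial (Fin 2) ℝ))
            (∑ k ∈ Finset.range (d + 1),
              MvPolynomial.C ((d.choose k : ℝ) * c k) *
                MvPolynomial.X 0 ^ k * MvPolynomial.X 1 ^ (d - k))))) := by
  have hid : i ≤ d := hi.trans (Nat.div_le_self d 2)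
  set A := Matrix.of fun (p : Fin (i + 1)) (q : Fin (d - i + 1)) => c (i + q.val - p.val)
  set Φ := (d.descFactorial i : ℝ) • binaryFormMap (R := ℝ) (d - i)
  have hκ : (d.descFactorial i : ℝ) ≠ 0 := Nat.cast_ne_zero.2 (Nat.descFactorial_pos.2 hid).ne'
  have hΦ : Function.Injective Φ := fun x y hxy =>
    binaryFormMap_injective _ (smul_right_injective (MvPolynomial (Fin 2) ℝ) hκ hxy)
  have hpartial : ∀ p : Fin (i + 1),
      ((pderiv 0).toLinearMap ^ p.val * (pderiv 1).toLinearMap ^ (i - p.val) :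
        Module.End ℝ (MvPolynomial (Fin 2) ℝ)) (binaryForm d c) = Φ (A.row p.rev) := by
    intro p
    rw [pderiv_pow_mul_pderiv_pow_binaryForm (by omega), Nat.add_sub_cancel' p.is_le,
      LinearMap.smul_apply, ← binaryFormMap_apply]
    congr 2
    funext q
    simp only [A, Matrix.row, Matrix.of_apply, Fin.val_rev]
    congr 1
    omega
  have hrange : Set.range (fun p : Fin (i + 1) => Φ (A.row p.rev)) = Φ '' Set.range A.row := by
    rw [← Set.range_comp, ← Fin.rev_surjective.range_comp (Φ ∘ A.row)]; rfl
  rw [← binaryForm, Matrix.rank_eq_finrank_span_row, funext hpartial, hrange, ← Submodule.map_span]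
  exact (Submodule.equivMapOfInjective Φ hΦ _).finrank_eq

open MvPolynomial in
/-- For `F = Σ_{k=0}^d binom(d,k)·c_k·X^k·Y^(d−k) ∈ ℝ[X,Y]` and
`0 ≤ i ≤ ⌊d/2⌋`, the rank of the `(i+1) × (d−i+1)` Toeplitz matrix `φ^i_d(c)` with `(p,q)`
entry `c_{i+q−p}` equals the dimension of the span of the `i`-th order partial derivatives
`{∂^i F/∂X^p ∂Y^(i−p) : 0 ≤ p ≤ i}` in `ℝ[X,Y]`. -/
theorem toeplitz_rank_eq_span_partials
    (d i : ℕ) (hi : i ≤ d / 2) (c : ℕ → ℝ) (hc : ∀ k, d < k → c k = 0) :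
    (Matrix.of fun (p : Fin (i + 1)) (q : Fin (d - i + 1)) =>
        c (i + q.val - p.val)).rank
      = Module.finrank ℝ (Submodule.span ℝ (Set.range fun p : Fin (i + 1) =>
          (((pderiv (0 : Fin 2)).toLinearMap ^ p.val *
              (pderiv (1 : Fin 2)).toLinearMap ^ (i - p.val) :
            Module.End ℝ (MvPolynomial (Fin 2) ℝ))
            (∑ k ∈ Finset.range (d + 1),
              MvPolynomial.C ((d.choose k : ℝ) * c k) *
                MvPolynomial.X 0 ^ k * MvPolynomial.X 1 ^ (d - k))))) :=
  toeplitz_rank_eq_span_partials_general d i hi c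
end

section
/- Let d ≥ 0 and 0 ≤ i ≤ ⌊d/2⌋, and let c = (c_0, …, c_d) ∈ ℝ^{d+1}, extended by c_k = 0 for k < 0 or k > d. Then the (i+1) × (d−i+1) Toeplitz matrix φ^i_d(c) with (p,q) entry c_{i+q−p} is totally positive if and only if c is strictly i-Lorentzian, i.e., if and only if for every 0 ≤ j ≤ i and every 0 ≤ m ≤ d−2j the (j+1) × (j+1) Toeplitz determinant det((c_{m+j+q−p})_{0 ≤ p,q ≤ j}) is positive. -/
/-!
A minor of a Toeplitz matrix on consecutive rows and columns is again a Toeplitz determinant,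
and the consecutive minors of `φ^i_d(c)` are exactly the determinants in the definition of a
strictly `i`-Lorentzian sequence. One direction is therefore immediate, and the other is Fekete's
criterion: a matrix whose minors on consecutive rows and columns are positive is totally
positive.

Fekete's criterion is proved by induction on the size of a minor and on the spread of its rows
and columns. If the rows of a minor leave a gap, insert a row into the gap: a three-term Plücker
relation among the minors of the enlarged `(k+1) × k` matrix expresses the original minor
through minors of smaller spread and minors of smaller size, all positive by induction.
-/

def Matrix.TotallyPositive {m n : ℕ} (M : Matrix (Fin m) (Fin n) ℝ) : Prop :=
  ∀ (t : ℕ) (r : Fin (t + 1) → Fin m) (s : Fin (t + 1) → Fin n),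
    StrictMono r → StrictMono s → 0 < (M.submatrix r s).det

theorem Fin.val_eq_val_zero_add {t k : ℕ} {r : Fin (t + 1) → Fin k}
    (hr : ∀ i : Fin t, (r i.succ : ℕ) = r i.castSucc + 1) (p : Fin (t + 1)) :
    (r p : ℕ) = r 0 + p := by
  induction p using Fin.induction with
  | zero => rfl
  | succ i ih => rw [hr, ih, Fin.val_succ, Fin.val_castSucc, add_assoc]

namespace Matrix

section CommRing

variable {R : Type*} [CommRing R] {n : ℕ}

theorem det_of_cons_removeNth (x : Fin (n + 1) → Fin (n + 1) → R) (p : Fin (n + 1)) :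
    (of (Fin.cons (x p) (p.removeNth x))).det = (-1) ^ (p : ℕ) * (of x).det := by
  rw [Fin.cons_removeNth_eq_comp_cycleRange_symm]
  change ((of x).submatrix p.cycleRange.symm id).det = _
  rw [det_permute, Equiv.Perm.sign_symm, Fin.sign_cycleRange]
  push_cast
  rfl

/-- Expand, along the first column, the vanishing determinant of `x` bordered by a copy of one of
its columns. -/
theorem sum_neg_one_pow_mul_det_removeNth_smul_eq_zero (x : Fin (n + 1) → Fin n → R) :
    ∑ i : Fin (n + 1), ((-1) ^ (i : ℕ) * (of (i.removeNth x)).det) • x i = 0 := by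
  ext k
  have hzero : (of fun i => Fin.cons (x i k) (x i) : Matrix (Fin (n + 1)) (Fin (n + 1)) R).det
      = 0 :=
    det_zero_of_column_eq (Fin.succ_ne_zero k).symm fun i => rfl
  have hminor (i : Fin (n + 1)) :
      (of fun i => Fin.cons (x i k) (x i)).submatrix i.succAbove Fin.succ = of (i.removeNth x) :=
    rfl
  rw [det_succ_column_zero] at hzero
  simpa [hminor, Finset.sum_apply, mul_comm, mul_left_comm, mul_assoc] using hzero

theorem sum_three_rows_det_removeNth_mul_eq_zero (N : Matrix (Fin (n + 3)) (Fin (n + 2)) R)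
    (b : Fin (n + 1)) (φ : (Fin (n + 2) → R) →ₗ[R] R)
    (hφ : ∀ q, φ (N (b.succAbove q).castSucc.succ) = 0) :
    (N.submatrix Fin.succ id).det * φ (N 0) +
      (-1) ^ ((b : ℕ) + 1) * (N.submatrix b.castSucc.succ.succAbove id).det *
        φ (N b.castSucc.succ) +
      (-1) ^ n * (N.submatrix Fin.castSucc id).det * φ (N (Fin.last (n + 2))) = 0 := by
  have key := congrArg φ (sum_neg_one_pow_mul_det_removeNth_smul_eq_zero N)
  rw [map_sum, map_zero, Fin.sum_univ_succ, Fin.sum_univ_castSucc, Fin.sum_univ_succAbove _ b]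
    at key
  have hlast : (of (Fin.removeNth (Fin.last (n + 1)).succ N)).det =
      (N.submatrix Fin.castSucc id).det := by
    congr 1
    ext i j
    simp [Fin.removeNth]
  simp only [map_smul, smul_eq_mul, hφ, mul_zero, Finset.sum_const_zero, add_zero, Fin.val_zero,
    pow_zero, one_mul] at key
  rw [hlast] at key
  change (N.submatrix Fin.succ id).det * φ (N 0) +
    ((-1) ^ ((b : ℕ) + 1) * (N.submatrix b.castSucc.succ.succAbove id).det * φ (N b.castSucc.succ) +
      (-1) ^ (n + 2) * (N.submatrix Fin.castSucc id).det * φ (N (Fin.last (n + 2)))) = 0 at key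
  rw [pow_add _ n 2, neg_one_sq, mul_one, ← add_assoc] at key
  exact key

/-- The three-term Plücker relation `D_β B_{0ℓ} = D_ℓ B_{0β} + B_{βℓ} D_0` for the rows `0`,
`β = b + 1` and `ℓ` (the last one) of an `(n+3) × (n+2)` matrix, where `D_k` omits row `k` and
`B_{kl}` omits rows `k`, `l` and the last column. -/
theorem pluecker_three_term (N : Matrix (Fin (n + 3)) (Fin (n + 2)) R) (b : Fin (n + 1)) :
    (N.submatrix b.castSucc.succ.succAbove id).det *
        (N.submatrix (Fin.succ ∘ Fin.castSucc) Fin.castSucc).det =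
      (N.submatrix Fin.castSucc id).det *
          (N.submatrix (Fin.succ ∘ b.castSucc.succAbove) Fin.castSucc).det +
        (N.submatrix (Fin.castSucc ∘ b.succ.succAbove) Fin.castSucc).det *
          (N.submatrix Fin.succ id).det := by
  set S : Fin n → Fin (n + 1) → R := fun q => Fin.init (N (b.succAbove q).castSucc.succ)
  -- `ψ y` is the minor on the first `n + 1` columns with rows `y` and `S`, which vanishes on `S`.
  let ψ : (Fin (n + 2) → R) →ₗ[R] R :=
    (detRowAlternating.toMultilinearMap.toLinearMap (Fin.cons 0 S) 0).comp
      (LinearMap.funLeft R R Fin.castSucc)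
  have hψ (y : Fin (n + 2) → R) : ψ y = (of (Fin.cons (Fin.init y) S)).det := by
    simp only [ψ, LinearMap.comp_apply, MultilinearMap.toLinearMap_apply, Fin.update_cons_zero]
    rfl
  have key := sum_three_rows_det_removeNth_mul_eq_zero N b ψ fun q => by
    rw [hψ]
    exact det_zero_of_row_eq (Fin.succ_ne_zero q).symm rfl
  have h0 : ψ (N 0) = (N.submatrix (Fin.castSucc ∘ b.succ.succAbove) Fin.castSucc).det := by
    have h := det_of_cons_removeNth (fun q => Fin.init (N (b.succ.succAbove q).castSucc)) 0
    have hS : Fin.removeNth 0 (fun q => Fin.init (N (b.succ.succAbove q).castSucc)) = S := by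
      funext q
      simp only [Fin.removeNth_zero, Fin.tail, S]
      rw [Fin.succ_succAbove_succ, ← Fin.succ_castSucc]
    rw [hS] at h
    simp only [Fin.succ_succAbove_zero, Fin.castSucc_zero, Fin.val_zero, pow_zero, one_mul] at h
    rw [hψ]
    exact h
  have hβ : ψ (N b.castSucc.succ) =
      (-1) ^ (b : ℕ) * (N.submatrix (Fin.succ ∘ Fin.castSucc) Fin.castSucc).det := by
    rw [hψ]
    exact det_of_cons_removeNth (fun q => Fin.init (N q.castSucc.succ)) b
  have hℓ : ψ (N (Fin.last (n + 2))) =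
      (-1) ^ n * (N.submatrix (Fin.succ ∘ b.castSucc.succAbove) Fin.castSucc).det := by
    have h := det_of_cons_removeNth (fun q => Fin.init (N (b.castSucc.succAbove q).succ))
      (Fin.last n)
    have hS : Fin.removeNth (Fin.last n) (fun q => Fin.init (N (b.castSucc.succAbove q).succ))
        = S := by
      funext q
      simp only [Fin.removeNth_last, Fin.init, S]
      rw [Fin.castSucc_succAbove_castSucc]
    rw [hS, Fin.succAbove_ne_last_last (Fin.castSucc_lt_last b).ne, Fin.val_last] at h
    rw [hψ]
    exact h
  have hsq (k : ℕ) : ((-1 : R) ^ k) ^ 2 = 1 := by rw [← pow_mul, mul_comm, pow_mul]; simp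
  rw [h0, hβ, hℓ] at key
  linear_combination -key - (N.submatrix b.castSucc.succ.succAbove id).det *
      (N.submatrix (Fin.succ ∘ Fin.castSucc) Fin.castSucc).det * hsq b +
    (N.submatrix Fin.castSucc id).det *
      (N.submatrix (Fin.succ ∘ b.castSucc.succAbove) Fin.castSucc).det * hsq n

end CommRing

variable {m n : ℕ}

def ConsecutiveMinorsPos (M : Matrix (Fin m) (Fin n) ℝ) : Prop :=
  ∀ (t : ℕ) (r : Fin (t + 1) → Fin m) (s : Fin (t + 1) → Fin n),
    (∀ p, (r p : ℕ) = r 0 + p) → (∀ q, (s q : ℕ) = s 0 + q) → 0 < (M.submatrix r s).det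

theorem ConsecutiveMinorsPos.transpose {M : Matrix (Fin m) (Fin n) ℝ}
    (hM : M.ConsecutiveMinorsPos) : Mᵀ.ConsecutiveMinorsPos := fun t r s hr hs => by
  rw [← transpose_submatrix, det_transpose]
  exact hM t s r hs hr

theorem det_submatrix_pos_of_gap (M : Matrix (Fin m) (Fin n) ℝ) {u : ℕ}
    {r : Fin (u + 2) → Fin m} {s : Fin (u + 2) → Fin n} (hr : StrictMono r) (hs : StrictMono s)
    (b : Fin (u + 1)) (hgap : (r b.castSucc : ℕ) + 1 < r b.succ)
    (hnarrow : ∀ r' : Fin (u + 2) → Fin m, StrictMono r' →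
      (r' (Fin.last _) : ℕ) - r' 0 < (r (Fin.last _) : ℕ) - r 0 → 0 < (M.submatrix r' s).det)
    (hsmall : ∀ (r' : Fin (u + 1) → Fin m) (s' : Fin (u + 1) → Fin n),
      StrictMono r' → StrictMono s' → 0 < (M.submatrix r' s').det) :
    0 < (M.submatrix r s).det := by
  set w : Fin (u + 3) → Fin m :=
    Fin.insertNth b.castSucc.succ (α := fun _ => Fin m) ⟨r b.castSucc + 1, by omega⟩ r
  have hw : StrictMono w :=
    Fin.strictMono_insertNth hr b _ (Fin.lt_def.2 (Nat.lt_succ_self _)) (Fin.lt_def.2 hgap)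
  have hwr : w ∘ b.castSucc.succ.succAbove = r := funext (Fin.insertNth_apply_succAbove _ _ _)
  have hw0 : w 0 = r 0 := by
    rw [← Fin.succAbove_ne_zero_zero (Fin.succ_ne_zero b.castSucc), ← hwr]
    rfl
  have hwlast : w (Fin.last _) = r (Fin.last _) := by
    rw [← Fin.succAbove_ne_last_last (Fin.succ_ne_last_of_lt (Fin.castSucc_lt_last b)), ← hwr]
    rfl
  have hB (g : Fin (u + 1) → Fin (u + 3)) (hg : StrictMono g) :
      0 < (M.submatrix (w ∘ g) (s ∘ Fin.castSucc)).det :=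
    hsmall _ _ (hw.comp hg) (hs.comp Fin.strictMono_castSucc)
  have hA₁ : 0 < (M.submatrix (w ∘ Fin.castSucc) s).det := by
    refine hnarrow _ (hw.comp Fin.strictMono_castSucc) ?_
    have h₁ := Fin.lt_def.1 (hw (Fin.castSucc_lt_last (Fin.last (u + 1))))
    have h₂ := Fin.le_def.1 (hw.monotone (Fin.zero_le (Fin.last (u + 1)).castSucc))
    simp only [Function.comp_apply, Fin.castSucc_zero, hw0, hwlast] at h₁ h₂ ⊢
    omega
  have hA₂ : 0 < (M.submatrix (w ∘ Fin.succ) s).det := by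
    refine hnarrow _ (hw.comp Fin.strictMono_succ) ?_
    have h₁ := Fin.lt_def.1 (hw (Fin.succ_pos (0 : Fin (u + 2))))
    have h₂ := Fin.le_def.1 (hw.monotone (Fin.le_last (0 : Fin (u + 2)).succ))
    simp only [Function.comp_apply, Fin.succ_last, hw0, hwlast] at h₁ h₂ ⊢
    omega
  have key := pluecker_three_term (M.submatrix w s) b
  simp only [submatrix_submatrix, hwr, Function.comp_id] at key
  refine pos_of_mul_pos_left ?_ (hB _ (Fin.strictMono_succ.comp Fin.strictMono_castSucc)).le
  rw [key]
  exact add_pos (mul_pos hA₁ (hB _ (Fin.strictMono_succ.comp (Fin.strictMono_succAbove _))))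
    (mul_pos (hB _ (Fin.strictMono_castSucc.comp (Fin.strictMono_succAbove _))) hA₂)

theorem ConsecutiveMinorsPos.det_submatrix_pos_of_spread_le {M : Matrix (Fin m) (Fin n) ℝ}
    (hM : M.ConsecutiveMinorsPos) (t D : ℕ) (r : Fin (t + 1) → Fin m) (s : Fin (t + 1) → Fin n)
    (hr : StrictMono r) (hs : StrictMono s)
    (hD : (r (Fin.last t) : ℕ) - r 0 + ((s (Fin.last t) : ℕ) - s 0) ≤ D) :
    0 < (M.submatrix r s).det := by
  induction t using Nat.strong_induction_on generalizing m n D with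
  | _ t iht =>
  induction D using Nat.strong_induction_on generalizing m n with
  | _ D ihD =>
  by_cases hrc : ∀ i : Fin t, (r i.succ : ℕ) = r i.castSucc + 1
  · by_cases hsc : ∀ i : Fin t, (s i.succ : ℕ) = s i.castSucc + 1
    · exact hM t r s (Fin.val_eq_val_zero_add hrc) (Fin.val_eq_val_zero_add hsc)
    obtain ⟨b, hb⟩ := not_forall.1 hsc
    obtain ⟨u, rfl⟩ : ∃ u, t = u + 1 := ⟨t - 1, by have := b.2; omega⟩
    have hgap := Fin.lt_def.1 (hs (show b.castSucc < b.succ from Fin.castSucc_lt_succ))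
    rw [← det_transpose, transpose_submatrix]
    refine det_submatrix_pos_of_gap Mᵀ hs hr b (by omega) (fun s' hs' hlt => ?_)
      (fun s' r' hs' hr' => iht u (by omega) hM.transpose _ s' r' hs' hr' le_rfl)
    rw [← transpose_submatrix, det_transpose]
    exact ihD _ (by omega) hM r s' hr hs' le_rfl
  obtain ⟨b, hb⟩ := not_forall.1 hrc
  obtain ⟨u, rfl⟩ : ∃ u, t = u + 1 := ⟨t - 1, by have := b.2; omega⟩
  have hgap := Fin.lt_def.1 (hr (show b.castSucc < b.succ from Fin.castSucc_lt_succ))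
  exact det_submatrix_pos_of_gap M hr hs b (by omega)
    (fun r' hr' hlt => ihD _ (by omega) hM r' s hr' hs le_rfl)
    (fun r' s' hr' hs' => iht u (by omega) hM _ r' s' hr' hs' le_rfl)

/-- Fekete's criterion. -/
theorem ConsecutiveMinorsPos.totallyPositive {M : Matrix (Fin m) (Fin n) ℝ}
    (hM : M.ConsecutiveMinorsPos) : M.TotallyPositive :=
  fun t r s hr hs => hM.det_submatrix_pos_of_spread_le t _ r s hr hs le_rfl

end Matrix

theorem toeplitz_totallyPositive_iff_strictlyLorentzian_general
    (d i : ℕ) (hi : i ≤ d / 2) (c : ℕ → ℝ) :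
    (Matrix.of fun (p : Fin (i + 1)) (q : Fin (d - i + 1)) =>
        c (i + q.val - p.val)).TotallyPositive
      ↔ ∀ j, j ≤ i → ∀ m, m ≤ d - 2*j →
          0 < (Matrix.of fun p q : Fin (j + 1) => c (m + j + q.val - p.val)).det := by
  constructor
  · intro hTP j hj m hm
    obtain ⟨a, b, ha, hb, hab⟩ : ∃ a b, a + j ≤ i ∧ b + j ≤ d - i ∧ i + b = a + (m + j) := by
      rcases le_or_gt m (d - i - j) with hm' | hm'
      · exact ⟨i - j, m, by omega, by omega, by omega⟩
      · exact ⟨d - 2 * j - m, d - i - j, by omega, by omega, by omega⟩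
    convert hTP j (Fin.castLE (show a + (j + 1) ≤ i + 1 by omega) ∘ Fin.natAdd a)
      (Fin.castLE (show b + (j + 1) ≤ d - i + 1 by omega) ∘ Fin.natAdd b)
      ((Fin.strictMono_castLE _).comp (Fin.strictMono_natAdd a))
      ((Fin.strictMono_castLE _).comp (Fin.strictMono_natAdd b)) using 2
    ext p q
    simp only [Matrix.of_apply, Matrix.submatrix_apply, Function.comp_apply, Fin.val_castLE,
      Fin.val_natAdd]
    congr 1
    omega
  · refine fun hL => Matrix.ConsecutiveMinorsPos.totallyPositive fun t r s hr hs => ?_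
    have hrt := hr (Fin.last t)
    have hst := hs (Fin.last t)
    rw [Fin.val_last] at hrt hst
    have := (r (Fin.last t)).isLt
    have := (s (Fin.last t)).isLt
    convert hL t (by omega) (i + s 0 - (r 0 + t)) (by omega) using 2
    ext p q
    simp only [Matrix.of_apply, Matrix.submatrix_apply, hr p, hs q]
    congr 1
    omega

/-- For `0 ≤ i ≤ ⌊d/2⌋` and `c = (c₀, …, c_d) ∈ ℝ^(d+1)` (extended by zero),
the `(i+1) × (d−i+1)` Toeplitz matrix `φ^i_d(c)` with `(p,q)` entry `c_{i+q−p}` is totally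
positive iff `c` is strictly `i`-Lorentzian, i.e. iff all the Toeplitz determinants
`det((c_{m+j+q−p})_{0 ≤ p,q ≤ j})` for `0 ≤ j ≤ i`, `0 ≤ m ≤ d−2j` are positive. -/
theorem toeplitz_totallyPositive_iff_strictlyLorentzian
    (d i : ℕ) (hi : i ≤ d / 2) (c : ℕ → ℝ) (hc : ∀ k, d < k → c k = 0) :
    (Matrix.of fun (p : Fin (i + 1)) (q : Fin (d - i + 1)) =>
        c (i + q.val - p.val)).TotallyPositive
      ↔ ∀ j, j ≤ i → ∀ m, m ≤ d - 2*j →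
          0 < (Matrix.of fun p q : Fin (j + 1) => c (m + j + q.val - p.val)).det :=
  toeplitz_totallyPositive_iff_strictlyLorentzian_general d i hi c
end

section
/- Let d ≥ 0 and let c_0, …, c_d be nonnegative real numbers such that the univariate polynomial f(t) = Σ_{k=0}^d c_k t^k splits into linear factors over ℝ (i.e., all of its complex roots are real; since the coefficients are nonnegative, all roots are then nonpositive, so F = Σ_k binom(d,k) c_k X^k Y^{d−k} is normally stable). Then for every 0 ≤ i ≤ ⌊d/2⌋, the (i+1) × (d−i+1) Toeplitz matrix φ^i_d(c) with (p,q) entry c_{i+q−p} (where c_k = 0 for k < 0 or k > d) is totally nonnegative; that is, c is i-Lorentzian for every i ≥ 0. -/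
/-!
Row `k` of the Toeplitz matrix of `g` holds the coefficients of `X ^ k * g`, so multiplying `g`
by `X + r` replaces row `k` by `r • row k + row (k + 1)`. Expanding a minor multilinearly in its
rows therefore writes it as a nonnegative combination of minors of the old matrix on weakly
increasing rows, each of which is either a genuine minor or has a repeated row. Starting from
the identity matrix (`g = 1`), this covers every `a * ∏ (X + r)` with `a, r ≥ 0`, and a split
polynomial with nonnegative coefficients has this form because it has no positive root.
-/

/-- A real matrix is totally nonnegative if every square minor (taken on strictly increasing
row indices and strictly increasing column indices) has nonnegative determinant. -/
def Matrix.TotallyNonneg {m n : ℕ} (M : Matrix (Fin m) (Fin n) ℝ) : Prop :=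
  ∀ (t : ℕ) (r : Fin (t + 1) → Fin m) (s : Fin (t + 1) → Fin n),
    StrictMono r → StrictMono s → 0 ≤ (M.submatrix r s).det

open Polynomial Matrix

theorem Matrix.det_add_eq_sum_piecewise {n R : Type*} [Fintype n] [DecidableEq n] [CommRing R]
    (A B : Matrix n n R) :
    (A + B).det = ∑ s : Finset n, (of fun i => if i ∈ s then A i else B i).det :=
  (detRowAlternating : (n → R) [⋀^n]→ₗ[R] R).map_add_univ A B

namespace Polynomial

section CommRing

variable {R : Type*} [CommRing R]

/-- The matrix of multiplication by `g` in the monomial basis: row `k` holds the coefficients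
of `X ^ k * g`, so its `(k, j)` entry is `g.coeff (j - k)` for `k ≤ j` and `0` otherwise. -/
noncomputable def toeplitz (g : R[X]) : Matrix ℕ ℕ R :=
  of fun k j => (X ^ k * g).coeff j

theorem toeplitz_one : toeplitz (1 : R[X]) = 1 := by
  ext k j
  simp [toeplitz, coeff_X_pow, one_apply, eq_comm]

theorem toeplitz_C_mul (a : R) (g : R[X]) : toeplitz (C a * g) = a • toeplitz g := by
  ext k j
  simp [toeplitz, mul_left_comm _ (C a), coeff_C_mul]

theorem toeplitz_X_add_C_mul_apply (r : R) (g : R[X]) (k j : ℕ) :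
    toeplitz ((X + C r) * g) k j = r * toeplitz g k j + toeplitz g (k + 1) j := by
  simp only [toeplitz, of_apply, ← coeff_C_mul, ← coeff_add]
  ring_nf

end CommRing

section Order

variable {R : Type*} [CommRing R] [PartialOrder R]

def ToeplitzTotallyNonneg (g : R[X]) : Prop :=
  ∀ (t : ℕ) (k j : Fin (t + 1) → ℕ), StrictMono k → StrictMono j →
    0 ≤ ((toeplitz g).submatrix k j).det

theorem ToeplitzTotallyNonneg.det_nonneg_of_monotone {g : R[X]} (hg : g.ToeplitzTotallyNonneg)
    {t : ℕ} {k j : Fin (t + 1) → ℕ} (hk : Monotone k) (hj : StrictMono j) :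
    0 ≤ ((toeplitz g).submatrix k j).det := by
  by_cases hinj : Function.Injective k
  · exact hg t k j (hk.strictMono_of_injective hinj) hj
  · obtain ⟨a, b, hab, hne⟩ : ∃ a b, k a = k b ∧ a ≠ b := by
      simpa [Function.Injective] using hinj
    rw [det_zero_of_row_eq hne (by ext; simp [hab])]

variable [IsOrderedRing R]

theorem toeplitzTotallyNonneg_one : ToeplitzTotallyNonneg (1 : R[X]) := by
  intro t k j hk hj
  rw [toeplitz_one]
  by_cases hrange : Set.range k ⊆ Set.range j
  · have hkj : k = j := (hk.range_inj hj).mp <| Set.eq_of_subset_of_card_le hrange <| by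
      simp [Set.card_range_of_injective hk.injective, Set.card_range_of_injective hj.injective]
    subst hkj
    simp [submatrix_one _ hk.injective]
  · obtain ⟨a, ha⟩ : ∃ a, ∀ b, j b ≠ k a := by
      simpa [Set.range_subset_iff] using hrange
    rw [det_eq_zero_of_row_eq_zero a fun b => by simp [one_apply, (ha b).symm]]

theorem ToeplitzTotallyNonneg.C_mul {g : R[X]} (hg : g.ToeplitzTotallyNonneg) {a : R}
    (ha : 0 ≤ a) : (C a * g).ToeplitzTotallyNonneg := by
  intro t k j hk hj
  simp only [toeplitz_C_mul, submatrix_smul, Pi.smul_apply, det_smul]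
  exact mul_nonneg (pow_nonneg ha _) (hg t k j hk hj)

theorem ToeplitzTotallyNonneg.X_add_C_mul {g : R[X]} (hg : g.ToeplitzTotallyNonneg) {r : R}
    (hr : 0 ≤ r) : ((X + C r) * g).ToeplitzTotallyNonneg := by
  intro t k j hk hj
  have hrows : (toeplitz ((X + C r) * g)).submatrix k j =
      r • (toeplitz g).submatrix k j + (toeplitz g).submatrix (k · + 1) j := by
    ext a b
    simp [toeplitz_X_add_C_mul_apply]
  rw [hrows, det_add_eq_sum_piecewise]
  refine Finset.sum_nonneg fun s _ => ?_
  have hpiece : (of fun a => if a ∈ s then (r • (toeplitz g).submatrix k j) a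
        else (toeplitz g).submatrix (k · + 1) j a) =
      of fun a b => (if a ∈ s then r else 1) *
        (toeplitz g).submatrix (fun a => if a ∈ s then k a else k a + 1) j a b := by
    ext a b
    by_cases ha : a ∈ s <;> simp [ha]
  rw [hpiece, det_mul_column]
  have hmono : Monotone fun a => if a ∈ s then k a else k a + 1 := by
    intro a b hab
    rcases hab.eq_or_lt with rfl | hlt
    · exact le_rfl
    · have := hk hlt
      dsimp only
      split_ifs <;> omega
  refine mul_nonneg (Finset.prod_nonneg fun a _ => ?_) (hg.det_nonneg_of_monotone hmono hj)
  split_ifs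
  exacts [hr, zero_le_one]

theorem toeplitzTotallyNonneg_prod_X_add_C {s : Multiset R} (hs : ∀ r ∈ s, 0 ≤ r) :
    (s.map (X + C ·)).prod.ToeplitzTotallyNonneg := by
  induction s using Multiset.induction with
  | empty => simpa using toeplitzTotallyNonneg_one
  | cons r s ih =>
    rw [Multiset.map_cons, Multiset.prod_cons]
    exact (ih fun x hx => hs x (Multiset.mem_cons_of_mem hx)).X_add_C_mul
      (hs r (Multiset.mem_cons_self r s))

end Order

section LinearOrder

variable {R : Type*} [CommRing R] [LinearOrder R] [IsStrictOrderedRing R]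

theorem eval_pos_of_coeff_nonneg {p : R[X]} (hp : p ≠ 0) (hcoeff : ∀ n, 0 ≤ p.coeff n) {z : R}
    (hz : 0 < z) : 0 < p.eval z := by
  rw [eval_eq_sum_range]
  refine Finset.sum_pos' (fun n _ => mul_nonneg (hcoeff n) (pow_nonneg hz.le n))
    ⟨p.natDegree, by simp, mul_pos ?_ (pow_pos hz _)⟩
  exact (hcoeff _).lt_of_ne' (leadingCoeff_ne_zero.mpr hp)

theorem Splits.toeplitzTotallyNonneg {f : R[X]} (hf : f.Splits) (hcoeff : ∀ n, 0 ≤ f.coeff n) :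
    f.ToeplitzTotallyNonneg := by
  have hroots : ∀ z ∈ f.roots, z ≤ 0 := by
    intro z hz
    by_contra! hpos
    exact (eval_pos_of_coeff_nonneg (ne_zero_of_mem_roots hz) hcoeff hpos).ne'
      (isRoot_of_mem_roots hz)
  have hfactors : f.roots.map (X - C ·) = (f.roots.map (- ·)).map (X + C ·) := by
    simp [Multiset.map_map, sub_eq_add_neg]
  rw [hf.eq_prod_roots, hfactors]
  refine (toeplitzTotallyNonneg_prod_X_add_C ?_).C_mul (hcoeff _)
  simp only [Multiset.mem_map]
  rintro _ ⟨z, hz, rfl⟩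
  exact neg_nonneg.mpr (hroots z hz)

end LinearOrder

end Polynomial

theorem normallyStable_toeplitz_totallyNonneg_general
    (d : ℕ) (c : ℕ → ℝ)
    (hnn : ∀ k, 0 ≤ c k)
    (hsplit : Polynomial.Splits (Polynomial.map (RingHom.id ℝ)
      (∑ k ∈ Finset.range (d + 1), Polynomial.C (c k) * Polynomial.X ^ k))) :
    ∀ i, i ≤ d / 2 →
      (Matrix.of fun (p : Fin (i + 1)) (q : Fin (d - i + 1)) =>
        c (i + q.val - p.val)).TotallyNonneg := by
  set f : ℝ[X] := ∑ k ∈ Finset.range (d + 1), C (c k) * X ^ k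
  have hcoeff (n : ℕ) : f.coeff n = if n ∈ Finset.range (d + 1) then c n else 0 := by
    simp [f]
  have hf : f.ToeplitzTotallyNonneg := by
    refine (by simpa using hsplit : f.Splits).toeplitzTotallyNonneg fun n => ?_
    rw [hcoeff]
    split_ifs
    exacts [hnn n, le_rfl]
  intro i hi t r s hr hs
  have hminor : (of fun (p : Fin (i + 1)) (q : Fin (d - i + 1)) => c (i + q - p)).submatrix r s =
      (toeplitz f).submatrix (fun a => r a) (fun b => i + s b) := by
    ext a b
    have hp := (r a).isLt
    have hq := (s b).isLt
    simp only [submatrix_apply, of_apply, toeplitz, coeff_X_pow_mul', hcoeff, Finset.mem_range]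
    rw [if_pos (by omega), if_pos (by omega)]
  rw [hminor]
  exact hf t _ _ hr fun a b hab => by simpa using hs hab

/-- Let `c₀, …, c_d` be nonnegative reals (extended by zero) such that
`f(t) = Σ_k c_k t^k` splits into linear factors over `ℝ` (so that
`F = Σ_k binom(d,k) c_k X^k Y^(d−k)` is normally stable).  Then for every `0 ≤ i ≤ ⌊d/2⌋` the
`(i+1) × (d−i+1)` Toeplitz matrix `φ^i_d(c)` with `(p,q)` entry `c_{i+q−p}` is totally
nonnegative; that is, `c` is `i`-Lorentzian for every `i ≥ 0`. -/
theorem normallyStable_toeplitz_totallyNonneg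
    (d : ℕ) (c : ℕ → ℝ) (hc : ∀ k, d < k → c k = 0)
    (hnn : ∀ k, 0 ≤ c k)
    (hsplit : Polynomial.Splits (Polynomial.map (RingHom.id ℝ)
      (∑ k ∈ Finset.range (d + 1), Polynomial.C (c k) * Polynomial.X ^ k))) :
    ∀ i, i ≤ d / 2 →
      (Matrix.of fun (p : Fin (i + 1)) (q : Fin (d - i + 1)) =>
        c (i + q.val - p.val)).TotallyNonneg :=
  normallyStable_toeplitz_totallyNonneg_general d c hnn hsplit
end

section
/- Let s ≥ 1 and let a_1, …, a_s, b_1, …, b_s be nonnegative real numbers. Then the ℕ × ℕ lower-triangular Toeplitz matrix W_s(a,b), whose (p,q) entry is Σ_{K ⊆ {1,…,s}, |K| = p−q} (Π_{k∈K} a_k)·(Π_{k∉K} b_k) (interpreted as 0 unless 0 ≤ p−q ≤ s), is totally nonnegative: for every t ≥ 0 and all strictly increasing indices i_0 < i_1 < ⋯ < i_t and j_0 < j_1 < ⋯ < j_t in ℕ, the determinant of the (t+1) × (t+1) submatrix ((W_s(a,b))_{i_r, j_{r'}})_{0 ≤ r, r' ≤ t} is nonnegative. -/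
/-!
`W_s(a,b)` is the matrix of coefficients of `∏ₖ (aₖ X + bₖ)`: its `(p, q)` entry is the
coefficient of `X ^ p` in `X ^ q ∏ₖ (aₖ X + bₖ)`. Peeling off the last factor therefore turns
`W_{s+1}` into the column combination `b · W_s(p, q) + a · W_s(p, q + 1)`, i.e. `W_s` times a
nonnegative bidiagonal matrix. Expanding a minor of such a combination multilinearly in its
columns gives a nonnegative combination of minors of `W_s` on weakly increasing columns; those
are either minors on strictly increasing columns or have two equal columns. Induction on `s`
reduces everything to the minors of the identity matrix, which are `0` or `1`.
-/

/-- The weighted path matrix `W_s(a,b)`, indexed by `ℕ × ℕ`, whose `(p,q)` entry is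
`Σ_{K ⊆ {1,…,s}, |K| = p−q} (Π_{k∈K} a_k)·(Π_{k∉K} b_k)` (zero unless `0 ≤ p−q ≤ s`). -/
noncomputable def weightedPathMatrix (s : ℕ) (a b : Fin s → ℝ) : ℕ → ℕ → ℝ :=
  fun p q =>
    ∑ K ∈ Finset.univ.filter (fun K : Finset (Fin s) => K.card + q = p),
      (∏ k ∈ K, a k) * (∏ k ∈ Kᶜ, b k)

theorem Matrix.det_of_sum_col {R k ι : Type*} [CommRing R] [Fintype k] [DecidableEq k]
    [Fintype ι] (v : k → ι → k → R) :
    (Matrix.of fun i j => ∑ e, v j e i).det =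
      ∑ χ : k → ι, (Matrix.of fun i j => v j (χ j) i).det := by
  simp_rw [← Matrix.det_transpose (Matrix.of _)]
  convert (Matrix.detRowAlternating (R := R)).toMultilinearMap.map_sum v using 2
  · exact congrArg _ (by ext j i; simp [Finset.sum_apply])
  · rfl

namespace Matrix

variable {R : Type*} [CommRing R] [PartialOrder R] {m n : Type*} [LinearOrder m] [LinearOrder n]

def TotallyNonneg_s17 (A : Matrix m n R) : Prop :=
  ∀ (k : ℕ) (row : Fin k → m) (col : Fin k → n), StrictMono row → StrictMono col →
    0 ≤ (A.submatrix row col).det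

theorem totallyNonneg_one [ZeroLEOneClass R] : (1 : Matrix m m R).TotallyNonneg_s17 := by
  intro k row col hrow hcol
  by_cases hzeroRow : ∃ i, ∀ j, row i ≠ col j
  · obtain ⟨i, hi⟩ := hzeroRow
    rw [det_eq_zero_of_row_eq_zero i fun j => by simp [hi j]]
  by_cases hzeroCol : ∃ j, ∀ i, row i ≠ col j
  · obtain ⟨j, hj⟩ := hzeroCol
    rw [det_eq_zero_of_column_eq_zero j fun i => by simp [hj i]]
  push Not at hzeroRow hzeroCol
  have hrange : Set.range row = Set.range col := by
    ext x
    constructor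
    · rintro ⟨i, rfl⟩
      obtain ⟨j, hj⟩ := hzeroRow i
      exact ⟨j, hj.symm⟩
    · rintro ⟨j, rfl⟩
      exact hzeroCol j
  rw [(hrow.range_inj hcol).1 hrange, submatrix_one _ hcol.injective, det_one]
  exact zero_le_one

theorem TotallyNonneg_s17.det_submatrix_nonneg_of_monotone {A : Matrix m n R}
    (hA : A.TotallyNonneg_s17) {k : ℕ} {row : Fin k → m} {col : Fin k → n} (hrow : StrictMono row)
    (hcol : Monotone col) : 0 ≤ (A.submatrix row col).det := by
  by_cases hinj : Function.Injective col
  · exact hA k row col hrow (hcol.strictMono_of_injective hinj)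
  · obtain ⟨j, j', hjj', hne⟩ : ∃ j j', col j = col j' ∧ j ≠ j' := by
      simpa [Function.Injective] using hinj
    rw [det_zero_of_column_eq hne fun i => by simp [hjj']]

theorem TotallyNonneg_s17.of_mul_add_mul_succ [IsOrderedRing R] {A : Matrix m ℕ R}
    (hA : A.TotallyNonneg_s17) {a b : R} (ha : 0 ≤ a) (hb : 0 ≤ b) :
    (of fun p q => b * A p q + a * A p (q + 1)).TotallyNonneg_s17 := by
  intro k row col hrow hcol
  let w : Bool → R := fun e => cond e a b
  let shift (χ : Fin k → Bool) (j : Fin k) : ℕ := col j + (χ j).toNat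
  have hexpand : ((of fun p q => b * A p q + a * A p (q + 1)).submatrix row col).det =
      ∑ χ : Fin k → Bool, (∏ j, w (χ j)) * (A.submatrix row (shift χ)).det := by
    convert det_of_sum_col fun j e i => w e * A (row i) (col j + e.toNat) using 2
    · ext i j
      simp [w, add_comm]
    · rw [← det_mul_row]
      rfl
  rw [hexpand]
  refine Finset.sum_nonneg fun χ _ =>
    mul_nonneg (Finset.prod_nonneg fun j _ => ?_) (hA.det_submatrix_nonneg_of_monotone hrow ?_)
  · cases χ j <;> assumption
  · intro j j' hjj'
    rcases hjj'.eq_or_lt with rfl | hlt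
    · rfl
    · have := hcol hlt
      have := Bool.toNat_le (χ j)
      simp only [shift]
      omega

end Matrix

open Polynomial

theorem weightedPathMatrix_eq_coeff (s : ℕ) (a b : Fin s → ℝ) (p q : ℕ) :
    weightedPathMatrix s a b p q = ((∏ k, (C (a k) * X + C (b k))) * X ^ q).coeff p := by
  rw [weightedPathMatrix, Finset.sum_filter, Finset.prod_add, Finset.powerset_univ,
    Finset.sum_mul, finsetSum_coeff]
  refine Finset.sum_congr rfl fun K _ => ?_
  rw [Finset.prod_mul_distrib, Finset.prod_const, ← map_prod, ← map_prod,
    ← Finset.compl_eq_univ_sdiff,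
    show C (∏ k ∈ K, a k) * X ^ K.card * C (∏ k ∈ Kᶜ, b k) * X ^ q =
      C ((∏ k ∈ K, a k) * ∏ k ∈ Kᶜ, b k) * X ^ (K.card + q) by rw [map_mul, pow_add]; ring,
    coeff_C_mul_X_pow]
  exact if_congr eq_comm rfl rfl

theorem weightedPathMatrix_zero (a b : Fin 0 → ℝ) : Matrix.of (weightedPathMatrix 0 a b) = 1 := by
  ext p q
  simp [weightedPathMatrix_eq_coeff, coeff_X_pow, Matrix.one_apply]

theorem weightedPathMatrix_succ {s : ℕ} (a b : Fin (s + 1) → ℝ) (p q : ℕ) :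
    weightedPathMatrix (s + 1) a b p q =
      b (Fin.last s) * weightedPathMatrix s (a ∘ Fin.castSucc) (b ∘ Fin.castSucc) p q +
        a (Fin.last s) * weightedPathMatrix s (a ∘ Fin.castSucc) (b ∘ Fin.castSucc) p (q + 1) := by
  simp only [weightedPathMatrix_eq_coeff, Fin.prod_univ_castSucc, Function.comp_apply]
  rw [← coeff_C_mul, ← coeff_C_mul, ← coeff_add]
  congr 1
  ring

theorem totallyNonneg_weightedPathMatrix {s : ℕ} {a b : Fin s → ℝ} (ha : ∀ k, 0 ≤ a k)
    (hb : ∀ k, 0 ≤ b k) : (Matrix.of (weightedPathMatrix s a b)).TotallyNonneg_s17 := by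
  induction s with
  | zero => exact weightedPathMatrix_zero a b ▸ Matrix.totallyNonneg_one
  | succ s ih =>
    have hW := (ih (fun k => ha k.castSucc) (fun k => hb k.castSucc)).of_mul_add_mul_succ
      (ha (Fin.last s)) (hb (Fin.last s))
    convert hW using 1
    ext p q
    exact weightedPathMatrix_succ a b p q

theorem weightedPathMatrix_totallyNonneg_general
    (s : ℕ) (a b : Fin s → ℝ)
    (ha : ∀ k, 0 ≤ a k) (hb : ∀ k, 0 ≤ b k) :
    ∀ (t : ℕ) (row col : Fin (t + 1) → ℕ),
      StrictMono row → StrictMono col →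
      0 ≤ (Matrix.of fun r r' : Fin (t + 1) =>
        weightedPathMatrix s a b (row r) (col r')).det :=
  fun t => totallyNonneg_weightedPathMatrix ha hb (t + 1)

/-- For `s ≥ 1` and nonnegative reals `a₁, …, a_s, b₁, …, b_s`, the
`ℕ × ℕ` lower-triangular Toeplitz weighted path matrix `W_s(a,b)` is totally nonnegative:
every finite square submatrix taken on strictly increasing row and column indices has
nonnegative determinant. -/
theorem weightedPathMatrix_totallyNonneg
    (s : ℕ) (hs : 1 ≤ s) (a b : Fin s → ℝ)
    (ha : ∀ k, 0 ≤ a k) (hb : ∀ k, 0 ≤ b k) :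
    ∀ (t : ℕ) (row col : Fin (t + 1) → ℕ),
      StrictMono row → StrictMono col →
      0 ≤ (Matrix.of fun r r' : Fin (t + 1) =>
        weightedPathMatrix s a b (row r) (col r')).det :=
  weightedPathMatrix_totallyNonneg_general s a b ha hb
end
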